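/- Let k be a commutative ring, A a k-algebra, e an idempotent of A, Λ := eAe, and λ ∈ Z(Λ). Then the multiplication ∗ on the k-module A ⊕ (Ae ⊗_Λ eA) given by (a + b e⊗e c) ∗ (a' + b' e⊗e c') = a a' + (a b' e ⊗ e c' + b e ⊗ e c a' + b e c b' e ⊗ λ e c') is associative with identity 1_A, and the resulting k-algebra R(A,e,λ) is an idealized extension of A by Ae ⊗_Λ eA: A is a subalgebra of R(A,e,λ) with the same identity, Ae ⊗_Λ eA is a two-sided ideal, and R(A,e,λ) = A ⊕ (Ae ⊗_Λ eA) as A-A-bimodules. -/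

import Mathlib

/-!
Common setup: bimodules over a ring `A`, a universal-property description of the
`A`-`A`-bimodule `Ae ⊗_{eAe} eA` (with distinguished element `u = e ⊗ e`),
a universal-property description of tensor products of bimodules over `A`,
and the center of the corner ring `eAe`.
-/

open MulOpposite

universe u

namespace Paper

/-- A bundled `A`-`A`-bimodule, encoded via commuting left `A`- and left `Aᵐᵒᵖ`-actions. -/
structure Bimod (A : Type u) [Ring A] : Type (u + 1) where
  carrier : Type u
  [addCommGroup : AddCommGroup carrier]
  [modLeft : Module A carrier]
  [modRight : Module Aᵐᵒᵖ carrier]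
  [smulComm : SMulCommClass A Aᵐᵒᵖ carrier]

attribute [instance] Bimod.addCommGroup Bimod.modLeft Bimod.modRight Bimod.smulComm

/-- A homomorphism of `A`-`A`-bimodules. -/
def IsBimodHom (A : Type u) [Ring A] {X Y : Type u} [AddCommGroup X] [AddCommGroup Y]
    [Module A X] [Module Aᵐᵒᵖ X] [Module A Y] [Module Aᵐᵒᵖ Y] (g : X → Y) : Prop :=
  (∀ x y : X, g (x + y) = g x + g y) ∧ (∀ (a : A) (x : X), g (a • x) = a • g x) ∧
    (∀ (a : Aᵐᵒᵖ) (x : X), g (a • x) = a • g x)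

variable (A : Type u) [Ring A]

/-- `(X, u)` is a model for the `A`-`A`-bimodule `Ae ⊗_{eAe} eA`, where `u` plays the
role of `e ⊗ e`.  This is expressed by the universal property: bimodule maps out of `X`
correspond exactly to elements `v` of the target with `v = e v e` and
`λ • v = v • λ` for all `λ ∈ eAe`. -/
structure IsAeTensor (e : A) (X : Type u) [AddCommGroup X]
    [Module A X] [Module Aᵐᵒᵖ X] [SMulCommClass A Aᵐᵒᵖ X] (u : X) : Prop where
  smul_e : e • u = u
  op_smul_e : op e • u = u
  balance : ∀ a : A, (e * a * e) • u = op (e * a * e) • u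
  universal : ∀ (Y : Bimod.{u} A) (v : Y.carrier), e • v = v → op e • v = v →
    (∀ a : A, (e * a * e) • v = op (e * a * e) • v) →
      ∃! g : X → Y.carrier, IsBimodHom A g ∧ g u = v

/-- The element `ae ⊗ eb` of (a model `(X, u)` of) `Ae ⊗_{eAe} eA`. -/
def tmk (e : A) {X : Type u} [AddCommGroup X] [Module A X] [Module Aᵐᵒᵖ X]
    (u : X) (a b : A) : X :=
  (a * e) • (op (e * b) • u)

/-- `t : X → Y → Z` is biadditive, `A`-balanced and bilinear over the outer
`A`-`A`-bimodule structures. -/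
def IsBalancedBiadd {X Y Z : Type u} [AddCommGroup X] [AddCommGroup Y] [AddCommGroup Z]
    [Module A X] [Module Aᵐᵒᵖ X] [Module A Y] [Module Aᵐᵒᵖ Y] [Module A Z] [Module Aᵐᵒᵖ Z]
    (t : X → Y → Z) : Prop :=
  (∀ x x' y, t (x + x') y = t x y + t x' y) ∧
  (∀ x y y', t x (y + y') = t x y + t x y') ∧
  (∀ (a : A) x y, t (op a • x) y = t x (a • y)) ∧
  (∀ (a : A) x y, t (a • x) y = a • t x y) ∧
  (∀ (a : A) x y, t x (op a • y) = op a • t x y)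

/-- `t : X → Y → T` is a model for the tensor product `X ⊗_A Y` of `A`-`A`-bimodules. -/
structure IsTensorOverA {X Y T : Type u} [AddCommGroup X] [AddCommGroup Y] [AddCommGroup T]
    [Module A X] [Module Aᵐᵒᵖ X] [Module A Y] [Module Aᵐᵒᵖ Y] [Module A T] [Module Aᵐᵒᵖ T]
    [SMulCommClass A Aᵐᵒᵖ T] (t : X → Y → T) : Prop where
  balanced : IsBalancedBiadd A t
  universal : ∀ (Z : Bimod.{u} A) (s : X → Y → Z.carrier), IsBalancedBiadd A s →
    ∃! g : T → Z.carrier, IsBimodHom A g ∧ ∀ x y, g (t x y) = s x y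

/-- The center `Z(eAe)` of the corner ring `eAe`, as a subset of `A`. -/
def centerCorner (e : A) : Set A :=
  {z | z = e * z * e ∧ ∀ a : A, z * (e * a * e) = (e * a * e) * z}

end Paper

namespace Paper

open MulOpposite

variable (A : Type u) [Ring A]

/-- The multiplication of the mirror-reflective algebra `R(A, e, λ)` on the
underlying `k`-module `A ⊕ (Ae ⊗_{eAe} eA)`, where `m = ω_λ` gives the
products of elements of the ideal `Ae ⊗_{eAe} eA`. -/
def mirrorMul {X : Type u} [AddCommGroup X] [Module A X] [Module Aᵐᵒᵖ X]
    (m : X → X → X) (p q : A × X) : A × X :=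
  (p.1 * q.1, p.1 • q.2 + op q.1 • p.2 + m p.2 q.2)

/-! The only axiom that is not bilinearity bookkeeping is the associativity of `ω_λ` on
`Ae ⊗_Λ eA`. By the universal property, `e ⊗ e` generates `Ae ⊗_Λ eA` as a bimodule
(a sub-bimodule containing it receives a bimodule map that splits its inclusion), so
associativity need only be checked on pure tensors `ae ⊗ eb`. There, after moving `λ`
across the tensor sign, it reduces to the identity `λ e w λ = e w λ λ` in `A`, which is
the centrality of `λ` in `eAe`. -/

section

variable {A}

theorem IsBalancedBiadd.map_zero_left {X Y Z : Type u} [AddCommGroup X] [AddCommGroup Y]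
    [AddCommGroup Z] [Module A X] [Module Aᵐᵒᵖ X] [Module A Y] [Module Aᵐᵒᵖ Y] [Module A Z]
    [Module Aᵐᵒᵖ Z] {t : X → Y → Z} (ht : IsBalancedBiadd A t) (y : Y) : t 0 y = 0 :=
  (AddMonoidHom.mk' (t · y) fun x x' => ht.1 x x' y).map_zero

theorem IsBalancedBiadd.map_zero_right {X Y Z : Type u} [AddCommGroup X] [AddCommGroup Y]
    [AddCommGroup Z] [Module A X] [Module Aᵐᵒᵖ X] [Module A Y] [Module Aᵐᵒᵖ Y] [Module A Z]
    [Module Aᵐᵒᵖ Z] {t : X → Y → Z} (ht : IsBalancedBiadd A t) (x : X) : t x 0 = 0 :=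
  (AddMonoidHom.mk' (t x) (ht.2.1 x)).map_zero

theorem mul_idem_mul_mul_eq_of_mem_centerCorner {e lam : A} (he : IsIdempotentElem e)
    (hlam : lam ∈ centerCorner A e) (w : A) : lam * e * w * lam = e * w * lam * lam := by
  obtain ⟨hlam_eq, hlam_comm⟩ := hlam
  have e_mul : e * lam = lam := by rw [hlam_eq, ← mul_assoc, ← mul_assoc, he]
  calc lam * e * w * lam = lam * e * w * (e * lam) := by rw [e_mul]
    _ = lam * (e * w * e) * lam := by simp only [mul_assoc]
    _ = e * w * lam * lam := by rw [hlam_comm, mul_assoc (e * w) e lam, e_mul]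

section Bimodule

variable {X : Type u} [AddCommGroup X] [Module A X] [Module Aᵐᵒᵖ X] {e : A} {u : X}

theorem tmk_smul (a b c : A) : a • tmk A e u b c = tmk A e u (a * b) c := by
  rw [tmk, tmk, smul_smul, mul_assoc]

variable [SMulCommClass A Aᵐᵒᵖ X]

abbrev Bimod.ofSubmodule (S : Submodule A X) (hS : ∀ (a : Aᵐᵒᵖ), ∀ x ∈ S, a • x ∈ S) : Bimod.{u} A :=
  letI : SMul Aᵐᵒᵖ S := ⟨fun a x => ⟨a • (x : X), hS a x x.2⟩⟩
  { carrier := S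
    modRight := Subtype.val_injective.module Aᵐᵒᵖ S.subtype.toAddMonoidHom fun _ _ => rfl
    smulComm := ⟨fun a b x => Subtype.ext (smul_comm a b (x : X))⟩ }

theorem op_smul_tmk (a b c : A) : op a • tmk A e u b c = tmk A e u b (c * a) := by
  rw [tmk, tmk, ← smul_comm (b * e), smul_smul, ← op_mul, mul_assoc]

namespace IsAeTensor

theorem tmk_eq_smul (hX : IsAeTensor A e X u) (a b : A) : tmk A e u a b = a • op b • u := by
  rw [tmk, op_mul, mul_smul, mul_smul, hX.op_smul_e, smul_comm e, hX.smul_e]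

theorem tmk_mul_corner (hX : IsAeTensor A e X u) (x c y : A) :
    tmk A e u x (e * c * e * y) = tmk A e u (x * (e * c * e)) y := by
  rw [hX.tmk_eq_smul, hX.tmk_eq_smul, op_mul, mul_smul, ← hX.balance, ← smul_comm (e * c * e),
    smul_smul]

theorem tmk_lam_mul {lam : A} (hX : IsAeTensor A e X u) (hlam : lam ∈ centerCorner A e)
    (x y : A) : tmk A e u x (lam * y) = tmk A e u (x * lam) y := by
  rw [hlam.1, hX.tmk_mul_corner]

theorem submodule_eq_top (hX : IsAeTensor A e X u) (S : Submodule A X)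
    (hS : ∀ (a : Aᵐᵒᵖ), ∀ x ∈ S, a • x ∈ S) (hu : u ∈ S) : S = ⊤ := by
  obtain ⟨g, ⟨⟨g_add, g_smul, g_op_smul⟩, g_u⟩, -⟩ := hX.universal (Bimod.ofSubmodule S hS) ⟨u, hu⟩
    (Subtype.ext hX.smul_e) (Subtype.ext hX.op_smul_e) fun a => Subtype.ext (hX.balance a)
  obtain ⟨_, -, h_uniq⟩ := hX.universal (Bimod.mk X) u hX.smul_e hX.op_smul_e hX.balance
  have val_g : ∀ x, ((g x : S) : X) = x := congrFun <|
    (h_uniq _ ⟨⟨fun x y => congrArg Subtype.val (g_add x y),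
      fun a x => congrArg Subtype.val (g_smul a x), fun a x => congrArg Subtype.val (g_op_smul a x)⟩,
      congrArg Subtype.val g_u⟩).trans
    (h_uniq id ⟨⟨fun _ _ => rfl, fun _ _ => rfl, fun _ _ => rfl⟩, rfl⟩).symm
  exact eq_top_iff.2 fun x _ => val_g x ▸ (g x).2

theorem mem_closure_tmk (hX : IsAeTensor A e X u) (x : X) :
    x ∈ AddSubmonoid.closure (Set.range fun p : A × A => tmk A e u p.1 p.2) := by
  set T := AddSubmonoid.closure (Set.range fun p : A × A => tmk A e u p.1 p.2)
  have stable (f : X →+ X) (hf : ∀ p : A × A, f (tmk A e u p.1 p.2) ∈ T) {x : X} (hx : x ∈ T) :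
      f x ∈ T :=
    (AddSubmonoid.closure_le (S := T.comap f)).2 (Set.range_subset_iff.2 hf) hx
  have smul_mem (a : A) (x : X) : x ∈ T → a • x ∈ T := by
    refine stable (DistribSMul.toAddMonoidHom X a) fun p => ?_
    rw [DistribSMul.toAddMonoidHom_apply, tmk_smul]
    exact AddSubmonoid.subset_closure ⟨(a * p.1, p.2), rfl⟩
  let S : Submodule A X := { T with smul_mem' := smul_mem }
  have hS (a : Aᵐᵒᵖ) (x : X) : x ∈ S → a • x ∈ S := by
    obtain ⟨a, rfl⟩ := op_surjective a
    refine stable (DistribSMul.toAddMonoidHom X (op a)) fun p => ?_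
    rw [DistribSMul.toAddMonoidHom_apply, op_smul_tmk]
    exact AddSubmonoid.subset_closure ⟨(p.1, p.2 * a), rfl⟩
  have hu : u ∈ S := AddSubmonoid.subset_closure ⟨(1, 1), by simp [hX.tmk_eq_smul]⟩
  exact Submodule.eq_top_iff'.1 (hX.submodule_eq_top S hS hu) x

theorem induction_on (hX : IsAeTensor A e X u) {motive : X → Prop} (x : X) (zero : motive 0)
    (add : ∀ x y, motive x → motive y → motive (x + y))
    (tmk : ∀ a b, motive (tmk A e u a b)) : motive x :=
  AddSubmonoid.closure_induction (fun _ ⟨p, hp⟩ => hp ▸ tmk p.1 p.2) zero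
    (fun x y _ _ => add x y) (hX.mem_closure_tmk x)

theorem assoc_of_assoc_tmk (hX : IsAeTensor A e X u) {m : X → X → X} (hm : IsBalancedBiadd A m)
    (h : ∀ a b a' b' a'' b'' : A, m (m (tmk A e u a b) (tmk A e u a' b')) (tmk A e u a'' b'') =
      m (tmk A e u a b) (m (tmk A e u a' b') (tmk A e u a'' b'')))
    (x y z : X) : m (m x y) z = m x (m y z) := by
  obtain ⟨add_left, add_right, -⟩ := id hm
  induction x using hX.induction_on with
  | zero => simp only [hm.map_zero_left]
  | add x x' hx hx' => rw [add_left, add_left, add_left, hx, hx']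
  | tmk a b =>
    induction y using hX.induction_on with
    | zero => simp only [hm.map_zero_left, hm.map_zero_right]
    | add y y' hy hy' => rw [add_right, add_left, add_left, add_right, hy, hy']
    | tmk a' b' =>
      induction z using hX.induction_on with
      | zero => simp only [hm.map_zero_right]
      | add z z' hz hz' => rw [add_right, add_right, add_right, hz, hz']
      | tmk a'' b'' => exact h a b a' b' a'' b''

theorem assoc_of_map_tmk_tmk (hX : IsAeTensor A e X u) (he : IsIdempotentElem e) {lam : A}
    (hlam : lam ∈ centerCorner A e) {m : X → X → X} (hm : IsBalancedBiadd A m)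
    (hmspec : ∀ b c b' c' : A, m (tmk A e u b c) (tmk A e u b' c') =
      tmk A e u (b * e * c * b') (lam * c')) (x y z : X) : m (m x y) z = m x (m y z) := by
  refine hX.assoc_of_assoc_tmk hm (fun a b a' b' a'' b'' => ?_) x y z
  simp only [hmspec, hX.tmk_lam_mul hlam]
  congr 1
  have key := congrArg (a * e * b * a' * ·)
    (mul_idem_mul_mul_eq_of_mem_centerCorner he hlam (b' * a''))
  simp only [← mul_assoc] at key ⊢
  exact key

end IsAeTensor

end Bimodule

section MirrorMul

variable {X : Type u} [AddCommGroup X] [Module A X] [Module Aᵐᵒᵖ X] {m : X → X → X}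

theorem mirrorMul_assoc [SMulCommClass A Aᵐᵒᵖ X] (hm : IsBalancedBiadd A m)
    (hassoc : ∀ x y z : X, m (m x y) z = m x (m y z)) (p q r : A × X) :
    mirrorMul A m (mirrorMul A m p q) r = mirrorMul A m p (mirrorMul A m q r) := by
  obtain ⟨add_left, add_right, balanced, smul_left, op_smul_right⟩ := hm
  refine Prod.ext (mul_assoc p.1 q.1 r.1) ?_
  simp only [mirrorMul, mul_smul, op_mul, smul_add, add_left, add_right, smul_left,
    op_smul_right, balanced, hassoc, smul_comm p.1 (op r.1) q.2]
  abel

theorem one_mirrorMul (hm : IsBalancedBiadd A m) (p : A × X) : mirrorMul A m (1, 0) p = p := by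
  simp [mirrorMul, hm.map_zero_left]

theorem mirrorMul_one (hm : IsBalancedBiadd A m) (p : A × X) : mirrorMul A m p (1, 0) = p := by
  simp [mirrorMul, hm.map_zero_right]

theorem mirrorMul_add (hm : IsBalancedBiadd A m) (p q r : A × X) :
    mirrorMul A m p (q + r) = mirrorMul A m p q + mirrorMul A m p r := by
  refine Prod.ext (mul_add p.1 q.1 r.1) ?_
  simp only [mirrorMul, Prod.fst_add, Prod.snd_add, smul_add, op_add, add_smul, hm.2.1]
  abel

theorem add_mirrorMul (hm : IsBalancedBiadd A m) (p q r : A × X) :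
    mirrorMul A m (p + q) r = mirrorMul A m p r + mirrorMul A m q r := by
  refine Prod.ext (add_mul p.1 q.1 r.1) ?_
  simp only [mirrorMul, Prod.fst_add, Prod.snd_add, smul_add, add_smul, hm.1]
  abel

theorem smul_mirrorMul [SMulCommClass A Aᵐᵒᵖ X] (hm : IsBalancedBiadd A m) (a : A)
    (p q : A × X) : mirrorMul A m (a * p.1, a • p.2) q =
      (a * (mirrorMul A m p q).1, a • (mirrorMul A m p q).2) := by
  refine Prod.ext (mul_assoc a p.1 q.1) ?_
  simp only [mirrorMul, mul_smul, smul_add, hm.2.2.2.1, smul_comm a (op q.1) p.2]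

end MirrorMul

end

/-- The multiplication
`(a + be⊗ec) ∗ (a' + b'e⊗ec') = aa' + (ab'e⊗ec' + be⊗eca' + becb'e⊗λec')`
on `A ⊕ (Ae ⊗_{eAe} eA)` is associative with identity `1_A`, distributive, and the
resulting `k`-algebra `R(A, e, λ)` is an idealized extension of `A` by
`Ae ⊗_{eAe} eA`: `A` is a subalgebra with the same identity and
`Ae ⊗_{eAe} eA` is a two-sided ideal. -/
theorem mirror_reflective_is_idealized_extension
    (k : Type u) [CommRing k] [Algebra k A]
    (e : A) (he : IsIdempotentElem e)
    (lam : A) (hlam : lam ∈ centerCorner A e)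
    (X : Type u) [AddCommGroup X] [Module A X] [Module Aᵐᵒᵖ X] [SMulCommClass A Aᵐᵒᵖ X]
    (u : X) (hX : IsAeTensor A e X u)
    -- `m = ω_λ`, the multiplication on the ideal `X`:
    (m : X → X → X) (hm : IsBalancedBiadd A m)
    (hmspec : ∀ b c b' c' : A, m (tmk A e u b c) (tmk A e u b' c') =
      tmk A e u (b * e * c * b') (lam * c')) :
    -- associativity
    (∀ p q r : A × X, mirrorMul A m (mirrorMul A m p q) r =
        mirrorMul A m p (mirrorMul A m q r)) ∧
    -- `1_A` is the identity
    (∀ p : A × X, mirrorMul A m (1, 0) p = p) ∧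
    (∀ p : A × X, mirrorMul A m p (1, 0) = p) ∧
    -- distributivity (so that `R(A, e, λ)` is a `k`-algebra)
    (∀ p q r : A × X, mirrorMul A m p (q + r) = mirrorMul A m p q + mirrorMul A m p r) ∧
    (∀ p q r : A × X, mirrorMul A m (p + q) r = mirrorMul A m p r + mirrorMul A m q r) ∧
    (∀ (c : k) (p q : A × X), mirrorMul A m (algebraMap k A c * p.1, algebraMap k A c • p.2) q =
        (algebraMap k A c * (mirrorMul A m p q).1, algebraMap k A c • (mirrorMul A m p q).2)) ∧
    -- `A` is a subalgebra via `a ↦ (a, 0)`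
    (∀ a a' : A, mirrorMul A m (a, 0) (a', 0) = (a * a', 0)) ∧
    -- `X` is a two-sided ideal via `x ↦ (0, x)`
    (∀ (x : X) (p : A × X), (mirrorMul A m (0, x) p).1 = 0 ∧ (mirrorMul A m p (0, x)).1 = 0) ∧
    -- and `R(A, e, λ) = A ⊕ X` as `A`-`A`-bimodules
    (∀ (a : A) (x : X), mirrorMul A m (a, 0) (0, x) = (0, a • x) ∧
        mirrorMul A m (0, x) (a, 0) = (0, op a • x)) := by
  have omega_assoc := hX.assoc_of_map_tmk_tmk he hlam hm hmspec
  refine ⟨mirrorMul_assoc hm omega_assoc, one_mirrorMul hm, mirrorMul_one hm, mirrorMul_add hm,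
    add_mirrorMul hm, fun c => smul_mirrorMul hm (algebraMap k A c), fun a a' => ?_,
    fun x p => ⟨zero_mul p.1, mul_zero p.1⟩, fun a x => ⟨?_, ?_⟩⟩ <;>
  simp [mirrorMul, hm.map_zero_left, hm.map_zero_right]

end Paper
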